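/- For every tangent plane π, the set of black points contained in π is either the point set of a single line of π or the union of the point sets of two distinct (necessarily intersecting) lines of π. -/

import Mathlib

open Submodule Set

/-- The points of `PG(3,q)`: the 1-dimensional subspaces of a 4-dimensional
vector space over the field `K` of order `q`. -/
def pgPoint (K : Type) [Field K] : Set (Submodule K (Fin 4 → K)) :=
  {W | Module.finrank K ↥W = 1}

/-- The lines of `PG(3,q)`: the 2-dimensional subspaces. -/
def pgLine (K : Type) [Field K] : Set (Submodule K (Fin 4 → K)) :=
  {W | Module.finrank K ↥W = 2}

/-- The planes of `PG(3,q)`: the 3-dimensional subspaces. -/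
def pgPlane (K : Type) [Field K] : Set (Submodule K (Fin 4 → K)) :=
  {W | Module.finrank K ↥W = 3}

/-- The lines of the family `S` passing through the point `p`. -/
def linesThru (K : Type) [Field K] (S : Set (Submodule K (Fin 4 → K)))
    (p : Submodule K (Fin 4 → K)) : Set (Submodule K (Fin 4 → K)) :=
  {l | l ∈ S ∧ p ≤ l}

/-- The lines of the family `S` contained in the plane `π` (the set `S_π`). -/
def linesIn (K : Type) [Field K] (S : Set (Submodule K (Fin 4 → K)))
    (π : Submodule K (Fin 4 → K)) : Set (Submodule K (Fin 4 → K)) :=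
  {l | l ∈ S ∧ l ≤ π}

/-- The lines of `S_π` belonging to the pencil of lines of the plane `π`
through the point `p`. -/
def pencilS (K : Type) [Field K] (S : Set (Submodule K (Fin 4 → K)))
    (p π : Submodule K (Fin 4 → K)) : Set (Submodule K (Fin 4 → K)) :=
  {l | l ∈ S ∧ p ≤ l ∧ l ≤ π}

/-- Property (P1): every point lies on exactly `q(q+1)/2` or exactly `q^2`
lines of `S`, and both numbers are attained. -/
def P1 (K : Type) [Field K] (S : Set (Submodule K (Fin 4 → K))) (q : ℕ) : Prop :=
  (∀ p ∈ pgPoint K, (linesThru K S p).ncard = q * (q + 1) / 2 ∨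
      (linesThru K S p).ncard = q ^ 2) ∧
  (∃ p ∈ pgPoint K, (linesThru K S p).ncard = q * (q + 1) / 2) ∧
  (∃ p ∈ pgPoint K, (linesThru K S p).ncard = q ^ 2)

/-- Property (P2): every plane contains exactly `q(q+1)/2` or exactly `q^2`
lines of `S`. -/
def P2 (K : Type) [Field K] (S : Set (Submodule K (Fin 4 → K))) (q : ℕ) : Prop :=
  ∀ π ∈ pgPlane K, (linesIn K S π).ncard = q * (q + 1) / 2 ∨
    (linesIn K S π).ncard = q ^ 2

/-- Property (P2a): if a plane contains `q^2` lines of `S`, then every pencil of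
lines in that plane contains `0` or `q` lines of `S`. -/
def P2a (K : Type) [Field K] (S : Set (Submodule K (Fin 4 → K))) (q : ℕ) : Prop :=
  ∀ π ∈ pgPlane K, (linesIn K S π).ncard = q ^ 2 →
    ∀ p ∈ pgPoint K, p ≤ π →
      (pencilS K S p π).ncard = 0 ∨ (pencilS K S p π).ncard = q

/-- Property (P2b): if a plane contains `q(q+1)/2` lines of `S`, then every
pencil of lines in that plane contains `(q-1)/2`, `(q+1)/2` or `q` lines of `S`. -/
def P2b (K : Type) [Field K] (S : Set (Submodule K (Fin 4 → K))) (q : ℕ) : Prop :=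
  ∀ π ∈ pgPlane K, (linesIn K S π).ncard = q * (q + 1) / 2 →
    ∀ p ∈ pgPoint K, p ≤ π →
      (pencilS K S p π).ncard = (q - 1) / 2 ∨
      (pencilS K S p π).ncard = (q + 1) / 2 ∨
      (pencilS K S p π).ncard = q

/-- A point is black if it lies on exactly `q^2` lines of `S`. -/
def IsBlack (K : Type) [Field K] (S : Set (Submodule K (Fin 4 → K))) (q : ℕ)
    (p : Submodule K (Fin 4 → K)) : Prop :=
  p ∈ pgPoint K ∧ (linesThru K S p).ncard = q ^ 2

/-- A plane is tangent if it contains exactly `q^2` lines of `S`. -/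
def IsTangent (K : Type) [Field K] (S : Set (Submodule K (Fin 4 → K))) (q : ℕ)
    (π : Submodule K (Fin 4 → K)) : Prop :=
  π ∈ pgPlane K ∧ (linesIn K S π).ncard = q ^ 2

/-- A plane is secant if it contains exactly `q(q+1)/2` lines of `S`. -/
def IsSecant (K : Type) [Field K] (S : Set (Submodule K (Fin 4 → K))) (q : ℕ)
    (π : Submodule K (Fin 4 → K)) : Prop :=
  π ∈ pgPlane K ∧ (linesIn K S π).ncard = q * (q + 1) / 2

/-- For a secant plane `π`, the set `α(π)` of points of `π` lying on exactly
`(q-1)/2` lines of `S_π`. -/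
def alphaSet (K : Type) [Field K] (S : Set (Submodule K (Fin 4 → K))) (q : ℕ)
    (π : Submodule K (Fin 4 → K)) : Set (Submodule K (Fin 4 → K)) :=
  {p | p ∈ pgPoint K ∧ p ≤ π ∧ (pencilS K S p π).ncard = (q - 1) / 2}

/-- For a secant plane `π`, the set `β(π)` of points of `π` lying on exactly
`(q+1)/2` lines of `S_π`. -/
def betaSet (K : Type) [Field K] (S : Set (Submodule K (Fin 4 → K))) (q : ℕ)
    (π : Submodule K (Fin 4 → K)) : Set (Submodule K (Fin 4 → K)) :=
  {p | p ∈ pgPoint K ∧ p ≤ π ∧ (pencilS K S p π).ncard = (q + 1) / 2}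

/-- For a secant plane `π`, the set `γ(π)` of points of `π` lying on exactly
`q` lines of `S_π`. -/
def gammaSet (K : Type) [Field K] (S : Set (Submodule K (Fin 4 → K))) (q : ℕ)
    (π : Submodule K (Fin 4 → K)) : Set (Submodule K (Fin 4 → K)) :=
  {p | p ∈ pgPoint K ∧ p ≤ π ∧ (pencilS K S p π).ncard = q}

/-!
Counting incidences shows that a tangent plane `π` has a *vertex* `p`: the lines of `S` in `π`
are exactly the lines of `π` missing `p`. A variance count over the planes through a black
point `x` shows that the `q + 1` lines through `x` outside `S` lie in one plane, of which `x` is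
then the vertex. Comparing `∑_{x ∈ ℓ} |S_x|` with `∑_{σ ⊇ ℓ} |S_σ|` shows that a line carries as
many black points as there are tangent planes through it. Hence vertices are black, and a line
with a white point carries at most one black point, or two if it belongs to `S`.

So the black points of `π` are the union of the lines through `p` in `π` consisting of black
points. There is at least one such line, since every line of `S_π` carries a black point; with
three of them every line of `S_π` would meet them in three black points, making all of `π`
black, and a count of the pencils at a white point outside `π` rules this out.
-/

namespace PG3

open Module
open scoped Classical

section Counting

theorem sum_ncard_sep_comm {α β : Type*} [Fintype α] [Fintype β] (A : Set α) (B : Set β)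
    (R : α → β → Prop) :
    ∑ a ∈ A.toFinset, {b ∈ B | R a b}.ncard = ∑ b ∈ B.toFinset, {a ∈ A | R a b}.ncard := by
  convert Finset.sum_card_bipartiteAbove_eq_sum_card_bipartiteBelow
    (s := A.toFinset) (t := B.toFinset) R using 2 <;>
  simp only [← Set.ncard_coe_finset, Finset.coe_bipartiteAbove, Finset.coe_bipartiteBelow,
    Set.mem_toFinset]

theorem ncard_mul_eq_ncard_mul {α β : Type*} [Finite α] [Finite β] (A : Set α) (B : Set β)
    (R : α → β → Prop) {m n : ℕ} (hA : ∀ a ∈ A, {b ∈ B | R a b}.ncard = m)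
    (hB : ∀ b ∈ B, {a ∈ A | R a b}.ncard = n) : A.ncard * m = B.ncard * n := by
  have := Fintype.ofFinite α
  have := Fintype.ofFinite β
  have h := sum_ncard_sep_comm A B R
  rwa [Finset.sum_congr rfl (fun a ha => hA a (Set.mem_toFinset.mp ha)),
    Finset.sum_congr rfl (fun b hb => hB b (Set.mem_toFinset.mp hb)), Finset.sum_const,
    Finset.sum_const, smul_eq_mul, smul_eq_mul, ← Set.ncard_eq_toFinset_card',
    ← Set.ncard_eq_toFinset_card'] at h

theorem sum_eq_ncard_sep_mul_add {α : Type*} [Fintype α] (A : Set α) (P : α → Prop) (f : α → ℕ)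
    {a b : ℕ} (ha : ∀ x ∈ A, P x → f x = a) (hb : ∀ x ∈ A, ¬ P x → f x = b) :
    ∑ x ∈ A.toFinset, f x = {x ∈ A | P x}.ncard * a + {x ∈ A | ¬ P x}.ncard * b := by
  rw [← Finset.sum_filter_add_sum_filter_not _ P,
    Finset.sum_congr rfl fun x hx => ha x (by simp_all) (Finset.mem_filter.mp hx).2,
    Finset.sum_congr rfl fun x hx => hb x (by simp_all) (Finset.mem_filter.mp hx).2,
    Finset.sum_const, Finset.sum_const, smul_eq_mul, smul_eq_mul, Set.ncard_eq_toFinset_card',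
    Set.ncard_eq_toFinset_card']
  congr 3 <;> ext <;> simp

theorem ncard_sep_add_ncard_sep_not {α : Type*} (A : Set α) (P : α → Prop) [Finite A] :
    {x ∈ A | P x}.ncard + {x ∈ A | ¬ P x}.ncard = A.ncard :=
  Set.ncard_inter_add_ncard_sdiff_eq_ncard A {x | P x}

theorem ncard_offDiag {α : Type*} (A : Set α) [Finite A] :
    A.offDiag.ncard = A.ncard * A.ncard - A.ncard := by
  have := Fintype.ofFinite A
  rw [Set.ncard_eq_toFinset_card', Set.toFinset_offDiag, Finset.offDiag_card,
    ← Set.ncard_eq_toFinset_card']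

theorem sum_ite_eq_ncard_add {α : Type*} [Fintype α] (A : Set α) (a : α) (c : ℕ) :
    ∑ b ∈ A.toFinset, (if b = a then c + 1 else 1) = A.ncard + if a ∈ A then c else 0 := by
  rw [Finset.sum_congr rfl fun b _ => (by split_ifs <;> omega :
      (if b = a then c + 1 else 1) = 1 + if b = a then c else 0),
    Finset.sum_add_distrib, Finset.sum_ite_eq', Finset.sum_const, smul_eq_mul, mul_one,
    ← Set.ncard_eq_toFinset_card']
  simp only [Set.mem_toFinset]

theorem eq_of_mul_add_mul_eq {a b k k' l l' : ℕ} (hab : a ≠ b) (hk : k + k' = l + l')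
    (h : k * a + k' * b = l * a + l' * b) : k = l := by
  have : ((k : ℤ) - l) * ((a : ℤ) - b) = 0 := by
    have h' : (k * a + k' * b : ℤ) = l * a + l' * b := by exact_mod_cast h
    have hk' : (k + k' : ℤ) = l + l' := by exact_mod_cast hk
    linear_combination h' - (b : ℤ) * hk'
  rcases mul_eq_zero.mp this with h | h
  · omega
  · omega

theorem exists_eq_two_mul_add_one {q : ℕ} (hq : 1 < q) (hq_odd : Odd q) :
    ∃ r, 1 ≤ r ∧ q = 2 * r + 1 ∧ q * (q + 1) / 2 = (2 * r + 1) * (r + 1) := by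
  obtain ⟨r, rfl⟩ := hq_odd
  refine ⟨r, by omega, rfl, ?_⟩
  rw [show (2 * r + 1) * (2 * r + 1 + 1) = 2 * ((2 * r + 1) * (r + 1)) by ring,
    Nat.mul_div_cancel_left _ two_pos]

theorem exists_le_of_sum_mul_pred {ι : Type*} (s : Finset ι) (c : ι → ℕ) {q : ℕ} (hq : 0 < q)
    (hs : s.card = q ^ 2 + q + 1) (hpos : ∀ i ∈ s, 1 ≤ c i)
    (hsum : ∑ i ∈ s, c i = (q + 1) * (q + 1))
    (hsum2 : ∑ i ∈ s, c i * (c i - 1) = (q + 1) * q) : ∃ i ∈ s, q + 1 ≤ c i := by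
  by_contra! hlt
  -- `(c - 1) (q - c) ≥ 0` on `[1, q]`, summed over `s`
  have hterm : ∀ i ∈ s, c i * (c i - 1) + q ≤ q * c i := by
    intro i hi
    obtain ⟨d, hd⟩ : ∃ d, c i = d + 1 := ⟨c i - 1, by have := hpos i hi; omega⟩
    have : d + 1 ≤ q := by have := hlt i hi; omega
    rw [hd, Nat.add_sub_cancel]
    nlinarith
  have := Finset.sum_le_sum hterm
  rw [Finset.sum_add_distrib, Finset.sum_const, smul_eq_mul, ← Finset.mul_sum, hsum, hsum2, hs]
    at this
  nlinarith

end Counting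

section Geometry

variable {K : Type} [Field K] {S : Set (Submodule K (Fin 4 → K))} {q : ℕ}
  {x y p ℓ m σ τ π U W W' : Submodule K (Fin 4 → K)}

def points (W : Submodule K (Fin 4 → K)) : Set (Submodule K (Fin 4 → K)) :=
  {p ∈ pgPoint K | p ≤ W}

def pencil (x U : Submodule K (Fin 4 → K)) : Set (Submodule K (Fin 4 → K)) :=
  {l ∈ pgLine K | x ≤ l ∧ l ≤ U}

def planesThrough (W : Submodule K (Fin 4 → K)) : Set (Submodule K (Fin 4 → K)) :=
  {σ ∈ pgPlane K | W ≤ σ}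

theorem points_mono (h : W ≤ U) : points W ⊆ points U := fun _ hp => ⟨hp.1, hp.2.trans h⟩

theorem finrank_le_four (W : Submodule K (Fin 4 → K)) : finrank K W ≤ 4 := by
  simpa using W.finrank_le

theorem finrank_inf_lt_of_ne (h : finrank K W = finrank K W') (hne : W ≠ W') :
    finrank K ↥(W ⊓ W') < finrank K W := by
  refine Submodule.finrank_lt_finrank_of_lt (inf_le_left.lt_of_ne fun heq => hne ?_)
  exact Submodule.eq_of_le_of_finrank_le (heq ▸ inf_le_right) h.ge

theorem finrank_inf_of_not_le (hp : p ∈ pgPoint K) (hpW : ¬ p ≤ W) : finrank K ↥(p ⊓ W) = 0 := by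
  have : p ⊓ W < p := inf_le_left.lt_of_ne fun heq => hpW (heq ▸ inf_le_right)
  have := Submodule.finrank_lt_finrank_of_lt this
  rw [hp] at this
  omega

theorem eq_of_mem_pgPoint (hx : x ∈ pgPoint K) (hy : y ∈ pgPoint K) (h : x ≤ y) : x = y :=
  Submodule.eq_of_le_of_finrank_le h (by rw [hx, hy])

theorem sup_mem_pgLine (hx : x ∈ pgPoint K) (hy : y ∈ pgPoint K) (hne : x ≠ y) :
    x ⊔ y ∈ pgLine K := by
  have := finrank_inf_lt_of_ne (hx.trans hy.symm) hne
  have := Submodule.finrank_sup_add_finrank_inf_eq x y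
  simp only [pgLine, pgPoint, Set.mem_ofPred_eq] at *
  omega

theorem eq_sup_of_le (hℓ : ℓ ∈ pgLine K) (hx : x ∈ pgPoint K) (hy : y ∈ pgPoint K) (hne : x ≠ y)
    (hxℓ : x ≤ ℓ) (hyℓ : y ≤ ℓ) : ℓ = x ⊔ y :=
  (Submodule.eq_of_le_of_finrank_le (sup_le hxℓ hyℓ) (by rw [hℓ, sup_mem_pgLine hx hy hne])).symm

theorem sup_mem_pgPlane (hℓ : ℓ ∈ pgLine K) (hp : p ∈ pgPoint K) (hpℓ : ¬ p ≤ ℓ) :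
    p ⊔ ℓ ∈ pgPlane K := by
  have := finrank_inf_of_not_le hp hpℓ
  have := Submodule.finrank_sup_add_finrank_inf_eq p ℓ
  simp only [pgLine, pgPoint, pgPlane, Set.mem_ofPred_eq] at *
  omega

theorem eq_sup_of_not_le (hσ : σ ∈ pgPlane K) (hℓ : ℓ ∈ pgLine K) (hp : p ∈ pgPoint K)
    (hpℓ : ¬ p ≤ ℓ) (hpσ : p ≤ σ) (hℓσ : ℓ ≤ σ) : σ = p ⊔ ℓ :=
  (Submodule.eq_of_le_of_finrank_le (sup_le hpσ hℓσ) (by rw [hσ, sup_mem_pgPlane hℓ hp hpℓ])).symm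

theorem sup_mem_pgPlane_of_ne (hℓ : ℓ ∈ pgLine K) (hm : m ∈ pgLine K) (hne : ℓ ≠ m)
    (hx : x ∈ pgPoint K) (hxℓ : x ≤ ℓ) (hxm : x ≤ m) : ℓ ⊔ m ∈ pgPlane K := by
  have hlt := finrank_inf_lt_of_ne (hℓ.trans hm.symm) hne
  have hdim := Submodule.finrank_sup_add_finrank_inf_eq ℓ m
  have hx_le := Submodule.finrank_mono (le_inf hxℓ hxm)
  simp only [pgLine, pgPoint, pgPlane, Set.mem_ofPred_eq] at *
  omega

theorem inf_eq_of_ne (hℓ : ℓ ∈ pgLine K) (hm : m ∈ pgLine K) (hne : ℓ ≠ m)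
    (hx : x ∈ pgPoint K) (hxℓ : x ≤ ℓ) (hxm : x ≤ m) : ℓ ⊓ m = x := by
  have hlt := finrank_inf_lt_of_ne (hℓ.trans hm.symm) hne
  refine (Submodule.eq_of_le_of_finrank_le (le_inf hxℓ hxm) ?_).symm
  rw [hx]
  rw [hℓ] at hlt
  omega

theorem eq_sup_of_ne (hσ : σ ∈ pgPlane K) (hℓ : ℓ ∈ pgLine K) (hm : m ∈ pgLine K) (hne : ℓ ≠ m)
    (hx : x ∈ pgPoint K) (hxℓ : x ≤ ℓ) (hxm : x ≤ m) (hℓσ : ℓ ≤ σ) (hmσ : m ≤ σ) :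
    σ = ℓ ⊔ m :=
  (Submodule.eq_of_le_of_finrank_le (sup_le hℓσ hmσ)
    (by rw [hσ, sup_mem_pgPlane_of_ne hℓ hm hne hx hxℓ hxm])).symm

theorem inf_mem_pgPoint (hσ : σ ∈ pgPlane K) (hℓ : ℓ ∈ pgLine K) (hm : m ∈ pgLine K)
    (hne : ℓ ≠ m) (hℓσ : ℓ ≤ σ) (hmσ : m ≤ σ) : ℓ ⊓ m ∈ pgPoint K := by
  have hlt := finrank_inf_lt_of_ne (hℓ.trans hm.symm) hne
  have hdim := Submodule.finrank_sup_add_finrank_inf_eq ℓ m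
  have hsup := Submodule.finrank_mono (sup_le hℓσ hmσ)
  simp only [pgLine, pgPoint, pgPlane, Set.mem_ofPred_eq] at *
  omega

theorem inf_mem_pgLine (hσ : σ ∈ pgPlane K) (hτ : τ ∈ pgPlane K) (hne : σ ≠ τ) :
    σ ⊓ τ ∈ pgLine K := by
  have hlt := finrank_inf_lt_of_ne (hσ.trans hτ.symm) hne
  have hdim := Submodule.finrank_sup_add_finrank_inf_eq σ τ
  have := finrank_le_four (σ ⊔ τ)
  simp only [pgLine, pgPlane, Set.mem_ofPred_eq] at *
  omega

theorem eq_inf_of_le (hσ : σ ∈ pgPlane K) (hτ : τ ∈ pgPlane K) (hne : σ ≠ τ)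
    (hℓ : ℓ ∈ pgLine K) (hℓσ : ℓ ≤ σ) (hℓτ : ℓ ≤ τ) : ℓ = σ ⊓ τ :=
  Submodule.eq_of_le_of_finrank_le (le_inf hℓσ hℓτ) (by rw [hℓ, inf_mem_pgLine hσ hτ hne])

theorem pencilS_eq_sep_linesThru : pencilS K S x σ = {l ∈ linesThru K S x | l ≤ σ} := by
  ext l; simp only [pencilS, linesThru, Set.mem_ofPred_eq, and_assoc]

theorem pencilS_eq_sep_linesIn : pencilS K S x σ = {l ∈ linesIn K S σ | x ≤ l} := by
  ext l; simp only [pencilS, linesIn, Set.mem_ofPred_eq]; tauto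

theorem isTangent_or_isSecant (h2 : P2 K S q) (hσ : σ ∈ pgPlane K) :
    IsTangent K S q σ ∨ IsSecant K S q σ :=
  (h2 σ hσ).symm.imp (⟨hσ, ·⟩) (⟨hσ, ·⟩)

theorem ncard_linesThru_of_not_isBlack (h1 : P1 K S q) (hx : x ∈ pgPoint K)
    (hxb : ¬ IsBlack K S q x) : (linesThru K S x).ncard = q * (q + 1) / 2 :=
  (h1.1 x hx).resolve_right fun h => hxb ⟨hx, h⟩

theorem ncard_pencilS_le (h2 : P2 K S q) (h2a : P2a K S q) (h2b : P2b K S q)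
    (hσ : σ ∈ pgPlane K) (hx : x ∈ pgPoint K) (hxσ : x ≤ σ) : (pencilS K S x σ).ncard ≤ q := by
  rcases h2 σ hσ with h | h
  · rcases h2b σ hσ h x hx hxσ with h' | h' | h' <;> omega
  · rcases h2a σ hσ h x hx hxσ with h' | h' <;> omega

theorem half_le_ncard_pencilS_of_isSecant (h2b : P2b K S q) (hσ : IsSecant K S q σ)
    (hx : x ∈ pgPoint K) (hxσ : x ≤ σ) : (q - 1) / 2 ≤ (pencilS K S x σ).ncard := by
  rcases h2b σ hσ.1 hσ.2 x hx hxσ with h' | h' | h' <;> omega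

def IsVertex (S : Set (Submodule K (Fin 4 → K))) (p π : Submodule K (Fin 4 → K)) : Prop :=
  p ∈ pgPoint K ∧ p ≤ π ∧ ∀ l ∈ pgLine K, l ≤ π → (l ∈ S ↔ ¬ p ≤ l)

theorem IsVertex.pencilS_eq_empty (hS : S ⊆ pgLine K) (h : IsVertex S p π) :
    pencilS K S p π = ∅ :=
  Set.eq_empty_of_forall_notMem fun l ⟨hlS, hpl, hlπ⟩ => (h.2.2 l (hS hlS) hlπ).mp hlS hpl

def blackLines (S : Set (Submodule K (Fin 4 → K))) (q : ℕ) (p π : Submodule K (Fin 4 → K)) :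
    Set (Submodule K (Fin 4 → K)) :=
  {l ∈ pencil p π | ∀ y ∈ points l, IsBlack K S q y}

end Geometry

section Finite

variable {K : Type} [Field K] [Fintype K] {S : Set (Submodule K (Fin 4 → K))} {q : ℕ}
  {x y p p' ℓ m σ σ' π U W : Submodule K (Fin 4 → K)}

noncomputable instance : Fintype (Submodule K (Fin 4 → K)) := Fintype.ofFinite _

theorem ncard_points {W : Submodule K (Fin 4 → K)} {n : ℕ} (hW : finrank K W = n) :
    (points W).ncard = ∑ i ∈ Finset.range n, Fintype.card K ^ i := by
  rw [← Nat.card_eq_fintype_card, ← Projectivization.card_of_finrank K W hW,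
    Nat.card_congr (Projectivization.equivSubmodule K W)]
  have hinj : Function.Injective (fun H : Submodule K W => H.map W.subtype) :=
    Submodule.map_injective_of_injective W.injective_subtype
  have : points W = (fun H : Submodule K W => H.map W.subtype) '' {H | finrank K H = 1} := by
    ext p
    constructor
    · rintro ⟨hp, hpW⟩
      have hmap : (p.comap W.subtype).map W.subtype = p := by simpa using hpW
      refine ⟨p.comap W.subtype, ?_, hmap⟩
      rw [Set.mem_ofPred_eq, ← Submodule.finrank_map_subtype_eq, hmap]
      exact hp
    · rintro ⟨H, hH, rfl⟩
      exact ⟨by simpa [pgPoint] using hH, Submodule.map_subtype_le W H⟩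
  rw [this, hinj.injOn.ncard_image, ← Nat.card_coe_set_eq]
  rfl

theorem ncard_points_of_mem_pgLine (hℓ : ℓ ∈ pgLine K) :
    (points ℓ).ncard = Fintype.card K + 1 := by
  rw [ncard_points hℓ]; simp [Finset.sum_range_succ, add_comm]

theorem ncard_points_of_mem_pgPlane (hσ : σ ∈ pgPlane K) :
    (points σ).ncard = Fintype.card K ^ 2 + Fintype.card K + 1 := by
  rw [ncard_points hσ]; simp [Finset.sum_range_succ]; ring

theorem ncard_points_top :
    (points (⊤ : Submodule K (Fin 4 → K))).ncard =
      Fintype.card K ^ 3 + Fintype.card K ^ 2 + Fintype.card K + 1 := by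
  rw [ncard_points (n := 4) (by simp)]; simp [Finset.sum_range_succ]; ring

theorem points_nonempty (hℓ : ℓ ∈ pgLine K) : (points ℓ).Nonempty := by
  rw [← Set.ncard_pos, ncard_points_of_mem_pgLine hℓ]; omega

theorem ncard_pencil_mul (hx : x ∈ pgPoint K) (hxU : x ≤ U) :
    (pencil x U).ncard * Fintype.card K = (points U).ncard - 1 := by
  have hfib : ∀ l ∈ pencil x U, {p ∈ points U \ {x} | p ≤ l}.ncard = Fintype.card K := by
    rintro l ⟨hl, hxl, hlU⟩
    have : {p ∈ points U \ {x} | p ≤ l} = points l \ {x} := by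
      ext p
      simp only [points, Set.mem_sdiff, Set.mem_ofPred_eq, Set.mem_singleton_iff]
      exact ⟨fun ⟨⟨⟨hp, _⟩, hpx⟩, hpl⟩ => ⟨⟨hp, hpl⟩, hpx⟩,
        fun ⟨⟨hp, hpl⟩, hpx⟩ => ⟨⟨⟨hp, hpl.trans hlU⟩, hpx⟩, hpl⟩⟩
    rw [this, Set.ncard_sdiff_singleton_of_mem (show x ∈ points l from ⟨hx, hxl⟩),
      ncard_points_of_mem_pgLine hl]
    rfl
  have hunique : ∀ p ∈ points U \ {x}, {l ∈ pencil x U | p ≤ l}.ncard = 1 := by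
    rintro p ⟨⟨hp, hpU⟩, hpx⟩
    have hne : x ≠ p := Ne.symm hpx
    rw [Set.ncard_eq_one]
    refine ⟨x ⊔ p, Set.eq_singleton_iff_unique_mem.mpr ⟨?_, ?_⟩⟩
    · exact ⟨⟨sup_mem_pgLine hx hp hne, le_sup_left, sup_le hxU hpU⟩, le_sup_right⟩
    · rintro l ⟨⟨hl, hxl, _⟩, hpl⟩
      exact eq_sup_of_le hl hx hp hne hxl hpl
  have := ncard_mul_eq_ncard_mul _ _ (fun p l => p ≤ l) hunique hfib
  rw [mul_one, Set.ncard_sdiff_singleton_of_mem (show x ∈ points U from ⟨hx, hxU⟩)] at this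
  exact this.symm

theorem ncard_pencil (hx : x ∈ pgPoint K) (hσ : σ ∈ pgPlane K) (hxσ : x ≤ σ) :
    (pencil x σ).ncard = Fintype.card K + 1 := by
  have h := ncard_pencil_mul hx hxσ
  rw [ncard_points_of_mem_pgPlane hσ] at h
  refine Nat.eq_of_mul_eq_mul_right (Fintype.card_pos (α := K)) ?_
  rw [h, Nat.add_sub_cancel]; ring

theorem ncard_pencil_top (hx : x ∈ pgPoint K) :
    (pencil x ⊤).ncard = Fintype.card K ^ 2 + Fintype.card K + 1 := by
  have h := ncard_pencil_mul hx le_top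
  rw [ncard_points_top] at h
  refine Nat.eq_of_mul_eq_mul_right (Fintype.card_pos (α := K)) ?_
  rw [h, Nat.add_sub_cancel]; ring

theorem ncard_planesThrough_of_mem_pgLine (hℓ : ℓ ∈ pgLine K) :
    (planesThrough ℓ).ncard = Fintype.card K + 1 := by
  have hfib : ∀ σ ∈ planesThrough ℓ, {p ∈ points ⊤ \ points ℓ | p ≤ σ}.ncard
      = Fintype.card K ^ 2 := by
    rintro σ ⟨hσ, hℓσ⟩
    have : {p ∈ points ⊤ \ points ℓ | p ≤ σ} = points σ \ points ℓ := by
      ext p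
      simp only [points, Set.mem_sdiff, Set.mem_ofPred_eq]
      exact ⟨fun ⟨⟨⟨hp, _⟩, hpℓ⟩, hpσ⟩ => ⟨⟨hp, hpσ⟩, hpℓ⟩,
        fun ⟨⟨hp, hpσ⟩, hpℓ⟩ => ⟨⟨⟨hp, le_top⟩, hpℓ⟩, hpσ⟩⟩
    rw [this, Set.ncard_sdiff (points_mono hℓσ),
      ncard_points_of_mem_pgPlane hσ, ncard_points_of_mem_pgLine hℓ]
    omega
  have hunique : ∀ p ∈ points ⊤ \ points ℓ, {σ ∈ planesThrough ℓ | p ≤ σ}.ncard = 1 := by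
    rintro p ⟨⟨hp, _⟩, hpℓ⟩
    have hpℓ' : ¬ p ≤ ℓ := fun h => hpℓ ⟨hp, h⟩
    rw [Set.ncard_eq_one]
    refine ⟨p ⊔ ℓ, Set.eq_singleton_iff_unique_mem.mpr ⟨?_, ?_⟩⟩
    · exact ⟨⟨sup_mem_pgPlane hℓ hp hpℓ', le_sup_right⟩, le_sup_left⟩
    · rintro σ ⟨⟨hσ, hℓσ⟩, hpσ⟩
      exact eq_sup_of_not_le hσ hℓ hp hpℓ' hpσ hℓσ
  have h := ncard_mul_eq_ncard_mul _ _ (fun p σ => p ≤ σ) hunique hfib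
  rw [mul_one, Set.ncard_sdiff (points_mono le_top), ncard_points_top,
    ncard_points_of_mem_pgLine hℓ] at h
  refine Nat.eq_of_mul_eq_mul_right (pow_pos (Fintype.card_pos (α := K)) 2) ?_
  rw [← h, show Fintype.card K ^ 3 + Fintype.card K ^ 2 + Fintype.card K + 1 =
    (Fintype.card K + 1) * Fintype.card K ^ 2 + (Fintype.card K + 1) by ring, Nat.add_sub_cancel]

theorem ncard_planesThrough_of_mem_pgPoint (hx : x ∈ pgPoint K) :
    (planesThrough x).ncard = Fintype.card K ^ 2 + Fintype.card K + 1 := by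
  have hlines : ∀ σ ∈ planesThrough x, {l ∈ pencil x ⊤ | l ≤ σ}.ncard = Fintype.card K + 1 := by
    rintro σ ⟨hσ, hxσ⟩
    rw [← ncard_pencil hx hσ hxσ]
    congr 1; ext l; simp only [pencil, Set.mem_ofPred_eq, le_top, and_true]; tauto
  have hplanes : ∀ l ∈ pencil x ⊤, {σ ∈ planesThrough x | l ≤ σ}.ncard = Fintype.card K + 1 := by
    rintro l ⟨hl, hxl, _⟩
    rw [← ncard_planesThrough_of_mem_pgLine hl]
    congr 1; ext σ; simp only [planesThrough, Set.mem_ofPred_eq]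
    exact ⟨fun ⟨⟨hσ, _⟩, hlσ⟩ => ⟨hσ, hlσ⟩, fun ⟨hσ, hlσ⟩ => ⟨⟨hσ, hxl.trans hlσ⟩, hlσ⟩⟩
  have h := ncard_mul_eq_ncard_mul _ _ (fun σ l => l ≤ σ) hlines hplanes
  rwa [ncard_pencil_top hx, Nat.mul_left_inj (by omega)] at h

theorem exists_planesThrough_forall_le (hq : Fintype.card K = q) (hx : x ∈ pgPoint K)
    {N : Set (Submodule K (Fin 4 → K))} (hNx : N ⊆ pencil x ⊤) (hN : N.ncard = q + 1)
    (hmeet : ∀ σ ∈ planesThrough x, 1 ≤ {l ∈ N | l ≤ σ}.ncard) :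
    ∃ σ ∈ planesThrough x, ∀ l ∈ N, l ≤ σ := by
  have hsum : ∑ σ ∈ (planesThrough x).toFinset, {l ∈ N | l ≤ σ}.ncard = (q + 1) * (q + 1) := by
    rw [sum_ncard_sep_comm, Finset.sum_congr rfl fun l hl => ?_, Finset.sum_const, smul_eq_mul,
      ← Set.ncard_eq_toFinset_card', hN]
    obtain ⟨hl, hxl, _⟩ := hNx (Set.mem_toFinset.mp hl)
    rw [← hq, ← ncard_planesThrough_of_mem_pgLine hl]
    congr 1; ext σ
    exact ⟨fun h => ⟨h.1.1, h.2⟩, fun h => ⟨⟨h.1, hxl.trans h.2⟩, h.2⟩⟩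
  have hpairs (σ) : {l ∈ N | l ≤ σ}.ncard * ({l ∈ N | l ≤ σ}.ncard - 1)
      = {pr ∈ N.offDiag | pr.1 ≤ σ ∧ pr.2 ≤ σ}.ncard := by
    rw [Nat.mul_sub_one, ← ncard_offDiag]
    congr 1; ext pr
    simp only [Set.mem_offDiag, Set.mem_ofPred_eq]
    tauto
  have hsum2 : ∑ σ ∈ (planesThrough x).toFinset,
      {l ∈ N | l ≤ σ}.ncard * ({l ∈ N | l ≤ σ}.ncard - 1) = (q + 1) * q := by
    simp_rw [hpairs]
    rw [sum_ncard_sep_comm, Finset.sum_congr rfl fun pr hpr => ?_, Finset.sum_const, smul_eq_mul,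
      mul_one, ← Set.ncard_eq_toFinset_card', ncard_offDiag, hN, ← Nat.mul_sub_one,
      Nat.add_sub_cancel]
    obtain ⟨hl1, hl2, hne⟩ : pr ∈ N.offDiag := by simpa using hpr
    obtain ⟨hl, hxl, _⟩ := hNx hl1
    obtain ⟨hm, hxm, _⟩ := hNx hl2
    have hplane := sup_mem_pgPlane_of_ne hl hm hne hx hxl hxm
    rw [Set.ncard_eq_one]
    refine ⟨pr.1 ⊔ pr.2, Set.eq_singleton_iff_unique_mem.mpr
      ⟨⟨⟨hplane, hxl.trans le_sup_left⟩, le_sup_left, le_sup_right⟩, ?_⟩⟩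
    rintro σ ⟨⟨hσ, _⟩, h1, h2⟩
    exact eq_sup_of_ne hσ hl hm hne hx hxl hxm h1 h2
  obtain ⟨σ, hσ, hle⟩ := exists_le_of_sum_mul_pred _ _ (hq ▸ Fintype.card_pos)
    (by rw [← Set.ncard_eq_toFinset_card', ncard_planesThrough_of_mem_pgPoint hx, hq])
    (fun σ hσ => hmeet σ (Set.mem_toFinset.mp hσ)) hsum hsum2
  have hall : {l ∈ N | l ≤ σ} = N :=
    Set.eq_of_subset_of_ncard_le (fun l hl => hl.1) (hN ▸ hle)
  exact ⟨σ, Set.mem_toFinset.mp hσ, fun l hl => (hall.symm.subset hl).2⟩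

theorem ncard_planesThrough_sep (hℓ : ℓ ∈ pgLine K) (hm : m ∈ pgLine K) (hx : x ∈ pgPoint K)
    (hxℓ : x ≤ ℓ) (hxm : x ≤ m) :
    {σ ∈ planesThrough ℓ | m ≤ σ}.ncard = if m = ℓ then Fintype.card K + 1 else 1 := by
  split_ifs with h
  · subst h
    rw [← ncard_planesThrough_of_mem_pgLine hm]
    congr 1; ext σ; exact ⟨fun h => h.1, fun h => ⟨h, h.2⟩⟩
  · rw [Set.ncard_eq_one]
    have hplane := sup_mem_pgPlane_of_ne hℓ hm (Ne.symm h) hx hxℓ hxm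
    refine ⟨ℓ ⊔ m, Set.eq_singleton_iff_unique_mem.mpr ⟨⟨⟨hplane, le_sup_left⟩, le_sup_right⟩, ?_⟩⟩
    rintro σ ⟨⟨hσ, hℓσ⟩, hmσ⟩
    exact eq_sup_of_ne hσ hℓ hm (Ne.symm h) hx hxℓ hxm hℓσ hmσ

theorem ncard_points_sep (hσ : σ ∈ pgPlane K) (hℓ : ℓ ∈ pgLine K) (hm : m ∈ pgLine K)
    (hℓσ : ℓ ≤ σ) (hmσ : m ≤ σ) :
    {x ∈ points ℓ | x ≤ m}.ncard = if m = ℓ then Fintype.card K + 1 else 1 := by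
  split_ifs with h
  · subst h
    rw [← ncard_points_of_mem_pgLine hm]
    congr 1; ext x; exact ⟨fun h => h.1, fun h => ⟨h, h.2⟩⟩
  · rw [Set.ncard_eq_one]
    have hpt := inf_mem_pgPoint hσ hℓ hm (Ne.symm h) hℓσ hmσ
    refine ⟨ℓ ⊓ m, Set.eq_singleton_iff_unique_mem.mpr ⟨⟨⟨hpt, inf_le_left⟩, inf_le_right⟩, ?_⟩⟩
    rintro x ⟨⟨hx, hxℓ⟩, hxm⟩
    exact eq_of_mem_pgPoint hx hpt (le_inf hxℓ hxm)

theorem ncard_pencilS_add_ncard_sep_not_mem (hS : S ⊆ pgLine K) (hx : x ∈ pgPoint K)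
    (hσ : σ ∈ pgPlane K) (hxσ : x ≤ σ) :
    (pencilS K S x σ).ncard + {l ∈ pencil x σ | l ∉ S}.ncard = Fintype.card K + 1 := by
  rw [← ncard_pencil hx hσ hxσ, ← Set.ncard_inter_add_ncard_sdiff_eq_ncard (pencil x σ) S]
  congr 2
  ext l
  simp only [pencilS, pencil, Set.mem_inter_iff, Set.mem_ofPred_eq]
  exact ⟨fun ⟨hlS, h⟩ => ⟨⟨hS hlS, h⟩, hlS⟩, fun ⟨⟨_, h⟩, hlS⟩ => ⟨hlS, h⟩⟩

theorem sum_ncard_pencilS_planesThrough_point (hS : S ⊆ pgLine K) :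
    ∑ σ ∈ (planesThrough x).toFinset, (pencilS K S x σ).ncard
      = (Fintype.card K + 1) * (linesThru K S x).ncard := by
  simp_rw [pencilS_eq_sep_linesThru]
  rw [sum_ncard_sep_comm, Finset.sum_congr rfl fun l hl => ?_, Finset.sum_const, smul_eq_mul,
    ← Set.ncard_eq_toFinset_card', mul_comm]
  obtain ⟨hlS, hxl⟩ := Set.mem_toFinset.mp hl
  rw [← ncard_planesThrough_of_mem_pgLine (hS hlS)]
  congr 1; ext σ
  exact ⟨fun h => ⟨h.1.1, h.2⟩, fun h => ⟨⟨h.1, hxl.trans h.2⟩, h.2⟩⟩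

theorem sum_ncard_pencilS_planesThrough_line (hS : S ⊆ pgLine K) (hℓ : ℓ ∈ pgLine K)
    (hx : x ∈ pgPoint K) (hxℓ : x ≤ ℓ) :
    ∑ σ ∈ (planesThrough ℓ).toFinset, (pencilS K S x σ).ncard
      = (linesThru K S x).ncard + if ℓ ∈ S then Fintype.card K else 0 := by
  simp_rw [pencilS_eq_sep_linesThru]
  rw [sum_ncard_sep_comm, if_congr (show ℓ ∈ S ↔ ℓ ∈ linesThru K S x from
    ⟨fun h => ⟨h, hxℓ⟩, fun h => h.1⟩) rfl rfl, ← sum_ite_eq_ncard_add]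
  refine Finset.sum_congr rfl fun m hm => ?_
  obtain ⟨hmS, hxm⟩ := Set.mem_toFinset.mp hm
  exact ncard_planesThrough_sep hℓ (hS hmS) hx hxℓ hxm

theorem sum_ncard_pencilS_points_line (hS : S ⊆ pgLine K) (hσ : σ ∈ pgPlane K)
    (hℓ : ℓ ∈ pgLine K) (hℓσ : ℓ ≤ σ) :
    ∑ x ∈ (points ℓ).toFinset, (pencilS K S x σ).ncard
      = (linesIn K S σ).ncard + if ℓ ∈ S then Fintype.card K else 0 := by
  simp_rw [pencilS_eq_sep_linesIn]
  rw [← sum_ncard_sep_comm, if_congr (show ℓ ∈ S ↔ ℓ ∈ linesIn K S σ from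
    ⟨fun h => ⟨h, hℓσ⟩, fun h => h.1⟩) rfl rfl, ← sum_ite_eq_ncard_add]
  refine Finset.sum_congr rfl fun m hm => ?_
  obtain ⟨hmS, hmσ⟩ := Set.mem_toFinset.mp hm
  exact ncard_points_sep hσ hℓ (hS hmS) hℓσ hmσ

theorem sum_ncard_pencilS_points_plane (hS : S ⊆ pgLine K) :
    ∑ x ∈ (points σ).toFinset, (pencilS K S x σ).ncard
      = (Fintype.card K + 1) * (linesIn K S σ).ncard := by
  simp_rw [pencilS_eq_sep_linesIn]
  rw [← sum_ncard_sep_comm, Finset.sum_congr rfl fun l hl => ?_, Finset.sum_const, smul_eq_mul,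
    ← Set.ncard_eq_toFinset_card', mul_comm]
  obtain ⟨hlS, hlσ⟩ := Set.mem_toFinset.mp hl
  rw [← ncard_points_of_mem_pgLine (hS hlS)]
  congr 1; ext x
  exact ⟨fun h => ⟨h.1.1, h.2⟩, fun h => ⟨⟨h.1, h.2.trans hlσ⟩, h.2⟩⟩

theorem IsVertex.ncard_pencilS_of_ne (hq : Fintype.card K = q) (hS : S ⊆ pgLine K)
    (h : IsVertex S p π) (hπ : π ∈ pgPlane K) (hx : x ∈ pgPoint K) (hxπ : x ≤ π) (hne : x ≠ p) :
    (pencilS K S x π).ncard = q := by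
  have : pencilS K S x π = pencil x π \ {x ⊔ p} := by
    ext l
    simp only [pencilS, pencil, Set.mem_sdiff, Set.mem_ofPred_eq, Set.mem_singleton_iff]
    constructor
    · rintro ⟨hlS, hxl, hlπ⟩
      refine ⟨⟨hS hlS, hxl, hlπ⟩, fun hl => (h.2.2 l (hS hlS) hlπ).mp hlS ?_⟩
      exact hl ▸ le_sup_right
    · rintro ⟨⟨hl, hxl, hlπ⟩, hlne⟩
      refine ⟨(h.2.2 l hl hlπ).mpr fun hpl => hlne ?_, hxl, hlπ⟩
      exact eq_sup_of_le hl hx h.1 hne hxl hpl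
  rw [this, Set.ncard_sdiff_singleton_of_mem (show x ⊔ p ∈ pencil x π from
    ⟨sup_mem_pgLine hx h.1 hne, le_sup_left, sup_le hxπ h.2.1⟩), ncard_pencil hx hπ hxπ, hq,
    Nat.add_sub_cancel]

theorem IsVertex.eq_of_ncard_pencilS_eq_zero (hq : Fintype.card K = q) (hS : S ⊆ pgLine K)
    (h : IsVertex S p π) (hπ : π ∈ pgPlane K) (hx : x ∈ pgPoint K) (hxπ : x ≤ π)
    (h0 : (pencilS K S x π).ncard = 0) : x = p := by
  by_contra hne
  have := h.ncard_pencilS_of_ne hq hS hπ hx hxπ hne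
  have := hq ▸ Fintype.one_lt_card (α := K)
  omega

theorem IsVertex.unique (hq : Fintype.card K = q) (hS : S ⊆ pgLine K) (hπ : π ∈ pgPlane K)
    (h : IsVertex S p π) (h' : IsVertex S p' π) : p = p' :=
  h'.eq_of_ncard_pencilS_eq_zero hq hS hπ h.1 h.2.1 (by rw [h.pencilS_eq_empty hS, Set.ncard_empty])

theorem ncard_sep_ncard_pencilS_eq_zero (hq : Fintype.card K = q) (hS : S ⊆ pgLine K)
    (h2a : P2a K S q) (hT : IsTangent K S q π) :
    {x ∈ points π | (pencilS K S x π).ncard = 0}.ncard = 1 := by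
  obtain ⟨hπ, hSπ⟩ := hT
  have hsum := sum_ncard_pencilS_points_plane (S := S) (σ := π) hS
  rw [sum_eq_ncard_sep_mul_add (points π) (fun x => (pencilS K S x π).ncard = 0) _
    (a := 0) (b := q) (fun _ _ h => h) (fun x hx h => (h2a π hπ hSπ x hx.1 hx.2).resolve_left h),
    mul_zero, zero_add, hSπ, hq] at hsum
  have hcard := ncard_sep_add_ncard_sep_not (points π) (fun x => (pencilS K S x π).ncard = 0)
  have hnZ := Nat.eq_of_mul_eq_mul_right (hq ▸ Fintype.card_pos)
    (hsum.trans (by ring : (q + 1) * q ^ 2 = (q ^ 2 + q) * q))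
  rw [ncard_points_of_mem_pgPlane hπ, hq] at hcard
  omega

theorem exists_isVertex_of_isTangent (hq : Fintype.card K = q) (hS : S ⊆ pgLine K)
    (h2a : P2a K S q) (hT : IsTangent K S q π) : ∃ p, IsVertex S p π := by
  obtain ⟨p, hZp⟩ := Set.ncard_eq_one.mp (ncard_sep_ncard_pencilS_eq_zero hq hS h2a hT)
  obtain ⟨hπ, hSπ⟩ := hT
  have hZ_iff (x) : x ∈ points π ∧ (pencilS K S x π).ncard = 0 ↔ x = p := by
    rw [← Set.mem_singleton_iff (a := x), ← hZp]; rfl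
  obtain ⟨⟨hp, hpπ⟩, hp0⟩ := (hZ_iff p).mpr rfl
  have hpS : ∀ l ∈ pgLine K, l ≤ π → p ≤ l → l ∉ S := fun l _ hlπ hpl hlS =>
    ((Set.ncard_eq_zero).mp hp0).subset ⟨hlS, hpl, hlπ⟩
  refine ⟨p, hp, hpπ, fun l hl hlπ => ⟨fun hlS hpl => hpS l hl hlπ hpl hlS, fun hpl => ?_⟩⟩
  by_contra hlS
  -- a point `x` of `l` has a full `S`-pencil, so `x ⊔ p` is its only line of `π` outside `S`
  obtain ⟨x, hx, hxl⟩ := points_nonempty hl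
  have hxp : x ≠ p := fun h => hpl (h ▸ hxl)
  have hpencil : (pencilS K S x π).ncard = q :=
    (h2a π hπ hSπ x hx (hxl.trans hlπ)).resolve_left fun h =>
      hxp ((hZ_iff x).mp ⟨⟨hx, hxl.trans hlπ⟩, h⟩)
  have hpart := ncard_pencilS_add_ncard_sep_not_mem hS hx hπ (hxl.trans hlπ)
  have hxp_line := sup_mem_pgLine hx hp hxp
  have htwo : ({l, x ⊔ p} : Set _) ⊆ {l ∈ pencil x π | l ∉ S} := by
    rintro m (rfl | rfl)
    · exact ⟨⟨hl, hxl, hlπ⟩, hlS⟩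
    · exact ⟨⟨hxp_line, le_sup_left, sup_le (hxl.trans hlπ) hpπ⟩,
        hpS _ hxp_line (sup_le (hxl.trans hlπ) hpπ) le_sup_right⟩
  have := Set.ncard_le_ncard htwo
  rw [Set.ncard_pair fun h => hpl (by rw [h]; exact le_sup_right)] at this
  rw [hq] at hpart
  omega

theorem ncard_sep_not_mem_of_isBlack (hq : Fintype.card K = q) (hS : S ⊆ pgLine K)
    (hx : IsBlack K S q x) : {l ∈ pencil x ⊤ | l ∉ S}.ncard = q + 1 := by
  have h := Set.ncard_inter_add_ncard_sdiff_eq_ncard (pencil x ⊤) S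
  have hinter : pencil x ⊤ ∩ S = linesThru K S x := by
    ext l
    exact ⟨fun ⟨⟨_, hxl, _⟩, hlS⟩ => ⟨hlS, hxl⟩, fun ⟨hlS, hxl⟩ => ⟨⟨hS hlS, hxl, le_top⟩, hlS⟩⟩
  rw [hinter, hx.2, ncard_pencil_top hx.1, hq] at h
  change _ + {l ∈ pencil x ⊤ | l ∉ S}.ncard = _ at h
  omega

theorem exists_plane_of_isBlack (hq : Fintype.card K = q) (hS : S ⊆ pgLine K) (h2 : P2 K S q)
    (h2a : P2a K S q) (h2b : P2b K S q) (hx : IsBlack K S q x) :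
    ∃ σ ∈ planesThrough x, ∀ l ∈ pencil x ⊤, l ∉ S → l ≤ σ := by
  refine (exists_planesThrough_forall_le hq hx.1 (fun l hl => hl.1)
    (ncard_sep_not_mem_of_isBlack hq hS hx) fun σ ⟨hσ, hxσ⟩ => ?_).imp
    fun σ ⟨hσ, h⟩ => ⟨hσ, fun l hl hlS => h l ⟨hl, hlS⟩⟩
  have hpart := ncard_pencilS_add_ncard_sep_not_mem hS hx.1 hσ hxσ
  have hle := ncard_pencilS_le h2 h2a h2b hσ hx.1 hxσ
  have : {l ∈ {l ∈ pencil x ⊤ | l ∉ S} | l ≤ σ} = {l ∈ pencil x σ | l ∉ S} := by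
    ext l
    simp only [pencil, Set.mem_ofPred_eq, le_top, and_true]
    tauto
  rw [this]
  omega

theorem exists_isVertex_of_isBlack (hq : Fintype.card K = q) (hq_odd : Odd q)
    (hS : S ⊆ pgLine K) (h2 : P2 K S q) (h2a : P2a K S q) (h2b : P2b K S q)
    (hx : IsBlack K S q x) :
    ∃ σ, IsTangent K S q σ ∧ IsVertex S x σ ∧ ∀ l ∈ pencil x ⊤, l ∉ S → l ≤ σ := by
  obtain ⟨σ, ⟨hσ, hxσ⟩, hσS⟩ := exists_plane_of_isBlack hq hS h2 h2a h2b hx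
  have hnonS : {l ∈ pencil x σ | l ∉ S} = {l ∈ pencil x ⊤ | l ∉ S} := by
    ext l
    simp only [pencil, Set.mem_ofPred_eq, le_top, and_true]
    exact ⟨fun ⟨⟨hl, hxl, _⟩, hlS⟩ => ⟨⟨hl, hxl⟩, hlS⟩,
      fun ⟨⟨hl, hxl⟩, hlS⟩ => ⟨⟨hl, hxl, hσS l ⟨hl, hxl, le_top⟩ hlS⟩, hlS⟩⟩
  have h0 : (pencilS K S x σ).ncard = 0 := by
    have := ncard_pencilS_add_ncard_sep_not_mem hS hx.1 hσ hxσ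
    rw [hnonS, ncard_sep_not_mem_of_isBlack hq hS hx, hq] at this
    omega
  have hT : IsTangent K S q σ := by
    refine (isTangent_or_isSecant h2 hσ).resolve_right fun hsec => ?_
    have := half_le_ncard_pencilS_of_isSecant h2b hsec hx.1 hxσ
    obtain ⟨r, hr, rfl, _⟩ := exists_eq_two_mul_add_one (hq ▸ Fintype.one_lt_card) hq_odd
    omega
  obtain ⟨p, hp⟩ := exists_isVertex_of_isTangent hq hS h2a hT
  obtain rfl := hp.eq_of_ncard_pencilS_eq_zero hq hS hσ hx.1 hxσ h0
  exact ⟨σ, hT, hp, hσS⟩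

theorem IsVertex.ncard_pencilS_of_ne_plane (hq : Fintype.card K = q) (hS : S ⊆ pgLine K)
    (hx : IsVertex S x σ) (hσ : σ ∈ pgPlane K) (hσS : ∀ l ∈ pencil x ⊤, l ∉ S → l ≤ σ)
    (hσ' : σ' ∈ pgPlane K) (hxσ' : x ≤ σ') (hne : σ' ≠ σ) : (pencilS K S x σ').ncard = q := by
  have hline := inf_mem_pgLine hσ' hσ hne
  have hnonS : {l ∈ pencil x σ' | l ∉ S} = {σ' ⊓ σ} := by
    refine Set.eq_singleton_iff_unique_mem.mpr ⟨⟨⟨hline, le_inf hxσ' hx.2.1, inf_le_left⟩, ?_⟩, ?_⟩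
    · exact fun h => (hx.2.2 _ hline inf_le_right).mp h (le_inf hxσ' hx.2.1)
    · rintro l ⟨⟨hl, hxl, hlσ'⟩, hlS⟩
      exact eq_inf_of_le hσ' hσ hne hl hlσ' (hσS l ⟨hl, hxl, le_top⟩ hlS)
  have := ncard_pencilS_add_ncard_sep_not_mem hS hx.1 hσ' hxσ'
  rw [hnonS, Set.ncard_singleton, hq] at this
  omega

theorem sq_ne_half_mul_succ (hq : Fintype.card K = q) (hq_odd : Odd q) :
    q ^ 2 ≠ q * (q + 1) / 2 := by
  obtain ⟨r, hr, rfl, hA⟩ := exists_eq_two_mul_add_one (hq ▸ Fintype.one_lt_card) hq_odd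
  rw [hA]
  nlinarith

theorem ncard_black_eq_ncard_tangent (hq : Fintype.card K = q) (hq_odd : Odd q)
    (hS : S ⊆ pgLine K) (h1 : P1 K S q) (h2 : P2 K S q) (hℓ : ℓ ∈ pgLine K) :
    {y ∈ points ℓ | IsBlack K S q y}.ncard = {σ ∈ planesThrough ℓ | IsTangent K S q σ}.ncard := by
  have hcomm := Finset.sum_comm (s := (points ℓ).toFinset) (t := (planesThrough ℓ).toFinset)
    (f := fun x σ => (pencilS K S x σ).ncard)
  rw [Finset.sum_congr rfl fun x hx => sum_ncard_pencilS_planesThrough_line hS hℓ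
      (Set.mem_toFinset.mp hx).1 (Set.mem_toFinset.mp hx).2,
    Finset.sum_congr rfl fun σ hσ => sum_ncard_pencilS_points_line hS
      (Set.mem_toFinset.mp hσ).1 hℓ (Set.mem_toFinset.mp hσ).2,
    Finset.sum_add_distrib, Finset.sum_add_distrib, Finset.sum_const, Finset.sum_const,
    ← Set.ncard_eq_toFinset_card', ← Set.ncard_eq_toFinset_card',
    ncard_points_of_mem_pgLine hℓ, ncard_planesThrough_of_mem_pgLine hℓ, Nat.add_right_cancel_iff,
    sum_eq_ncard_sep_mul_add _ (IsBlack K S q) _ (a := q ^ 2) (b := q * (q + 1) / 2)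
      (fun x _ hx => hx.2) (fun x hx hxb => ncard_linesThru_of_not_isBlack h1 hx.1 hxb),
    sum_eq_ncard_sep_mul_add _ (IsTangent K S q) _ (a := q ^ 2) (b := q * (q + 1) / 2)
      (fun σ _ hσ => hσ.2)
      (fun σ hσ hσt => ((isTangent_or_isSecant h2 hσ.1).resolve_left hσt).2)] at hcomm
  refine eq_of_mul_add_mul_eq (sq_ne_half_mul_succ hq hq_odd) ?_ hcomm
  rw [ncard_sep_add_ncard_sep_not, ncard_sep_add_ncard_sep_not, ncard_points_of_mem_pgLine hℓ,
    ncard_planesThrough_of_mem_pgLine hℓ]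

theorem linesIn_nonempty (hq : Fintype.card K = q) (hT : IsTangent K S q π) :
    (linesIn K S π).Nonempty := by
  rw [← Set.ncard_pos, hT.2]
  exact pow_pos (hq ▸ Fintype.card_pos) 2

theorem exists_isBlack_of_mem_linesIn (hq : Fintype.card K = q) (hq_odd : Odd q)
    (hS : S ⊆ pgLine K) (h1 : P1 K S q) (h2 : P2 K S q) (hT : IsTangent K S q π)
    (hℓ : ℓ ∈ linesIn K S π) : ∃ x ∈ points ℓ, IsBlack K S q x := by
  have : 0 < {σ ∈ planesThrough ℓ | IsTangent K S q σ}.ncard :=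
    (Set.ncard_pos).mpr ⟨π, ⟨hT.1, hℓ.2⟩, hT⟩
  rw [← ncard_black_eq_ncard_tangent hq hq_odd hS h1 h2 (hS hℓ.1)] at this
  exact (Set.ncard_pos).mp this

structure SatisfiesP (K : Type) [Field K] [Fintype K] (S : Set (Submodule K (Fin 4 → K)))
    (q : ℕ) : Prop where
  card : Fintype.card K = q
  odd : Odd q
  subset : S ⊆ pgLine K
  p1 : P1 K S q
  p2 : P2 K S q
  p2a : P2a K S q
  p2b : P2b K S q

theorem IsVertex.isBlack (hP : SatisfiesP K S q)
    (hT : IsTangent K S q π) (hp : IsVertex S p π) : IsBlack K S q p := by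
  by_contra hpw
  obtain ⟨ℓ, hℓ⟩ := linesIn_nonempty hP.card hT
  obtain ⟨x, ⟨hx, hxℓ⟩, hxb⟩ :=
    exists_isBlack_of_mem_linesIn hP.card hP.odd hP.subset hP.p1 hP.p2 hT hℓ
  have hxp : x ≠ p := fun h => hpw (h ▸ hxb)
  set ℓ₀ := x ⊔ p
  have hℓ₀ : ℓ₀ ∈ pgLine K := sup_mem_pgLine hx hp.1 hxp
  have hℓ₀π : ℓ₀ ≤ π := sup_le (hxℓ.trans hℓ.2) hp.2.1
  have hℓ₀S : ℓ₀ ∉ S := fun h => (hp.2.2 ℓ₀ hℓ₀ hℓ₀π).mp h le_sup_right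
  -- `y ↦ F y` injects the black points of `ℓ₀` into the tangent planes through `ℓ₀` other
  -- than `π`, of which there are fewer than black points by the count along `ℓ₀`
  have hvert : ∀ y ∈ {y ∈ points ℓ₀ | IsBlack K S q y}, ∃ σ, IsTangent K S q σ ∧
      IsVertex S y σ ∧ ℓ₀ ≤ σ := by
    rintro y ⟨⟨_, hyℓ₀⟩, hyb⟩
    obtain ⟨σ, hσT, hyσ, hσS⟩ :=
      exists_isVertex_of_isBlack hP.card hP.odd hP.subset hP.p2 hP.p2a hP.p2b hyb
    exact ⟨σ, hσT, hyσ, hσS ℓ₀ ⟨hℓ₀, hyℓ₀, le_top⟩ hℓ₀S⟩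
  choose! F hFT hFv hFℓ₀ using hvert
  have hle := Set.ncard_le_ncard_of_injOn F
    (t := {σ ∈ planesThrough ℓ₀ | IsTangent K S q σ} \ {π})
    (fun y hy => ⟨⟨⟨(hFT y hy).1, hFℓ₀ y hy⟩, hFT y hy⟩, fun hπ => hpw <|
      (hp.unique hP.card hP.subset hT.1 (hπ ▸ hFv y hy : IsVertex S y π)).symm ▸ hy.2⟩)
    (fun y hy y' hy' h => (hFv y hy).unique hP.card hP.subset (hFT y hy).1 (h ▸ hFv y' hy'))
  rw [Set.ncard_sdiff_singleton_of_mem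
      (show π ∈ {σ ∈ planesThrough ℓ₀ | IsTangent K S q σ} from ⟨⟨hT.1, hℓ₀π⟩, hT⟩),
    ← ncard_black_eq_ncard_tangent hP.card hP.odd hP.subset hP.p1 hP.p2 hℓ₀] at hle
  have : 0 < {y ∈ points ℓ₀ | IsBlack K S q y}.ncard :=
    (Set.ncard_pos).mpr ⟨x, ⟨hx, le_sup_left⟩, hxb⟩
  omega

theorem ncard_pencilS_of_not_isBlack (hP : SatisfiesP K S q)
    (hT : IsTangent K S q π) (hx : x ∈ pgPoint K) (hxπ : x ≤ π) (hxb : ¬ IsBlack K S q x) :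
    (pencilS K S x π).ncard = q := by
  obtain ⟨p, hp⟩ := exists_isVertex_of_isTangent hP.card hP.subset hP.p2a hT
  exact hp.ncard_pencilS_of_ne hP.card hP.subset hT.1 hx hxπ
    fun h => hxb (h ▸ hp.isBlack hP hT)

theorem forall_isBlack_of_lt_ncard (hP : SatisfiesP K S q)
    (hℓ : ℓ ∈ pgLine K) (h : (if ℓ ∈ S then 2 else 1) < {y ∈ points ℓ | IsBlack K S q y}.ncard) :
    ∀ w ∈ points ℓ, IsBlack K S q w := by
  intro w ⟨hw, hwℓ⟩
  by_contra hwb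
  obtain ⟨r, hr, hqr, hA⟩ := exists_eq_two_mul_add_one (hP.card ▸ Fintype.one_lt_card) hP.odd
  have hsum := sum_ncard_pencilS_planesThrough_line hP.subset hℓ hw hwℓ
  rw [ncard_linesThru_of_not_isBlack hP.p1 hw hwb, hA, hP.card] at hsum
  have hstar := ncard_black_eq_ncard_tangent hP.card hP.odd hP.subset hP.p1 hP.p2 hℓ
  have hlow : ∑ σ ∈ (planesThrough ℓ).toFinset, (if IsTangent K S q σ then q else r)
      ≤ ∑ σ ∈ (planesThrough ℓ).toFinset, (pencilS K S w σ).ncard := by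
    refine Finset.sum_le_sum fun σ hσ => ?_
    obtain ⟨hσ, hℓσ⟩ := Set.mem_toFinset.mp hσ
    split_ifs with hT
    · exact (ncard_pencilS_of_not_isBlack hP hT hw (hwℓ.trans hℓσ)
        hwb).ge
    · have := half_le_ncard_pencilS_of_isSecant hP.p2b
        ((isTangent_or_isSecant hP.p2 hσ).resolve_left hT) hw (hwℓ.trans hℓσ)
      omega
  rw [hsum, sum_eq_ncard_sep_mul_add _ (IsTangent K S q) _ (fun _ _ h => if_pos h)
    (fun _ _ h => if_neg h), ← hstar] at hlow
  have hcard := ncard_sep_add_ncard_sep_not (planesThrough ℓ) (IsTangent K S q)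
  rw [ncard_planesThrough_of_mem_pgLine hℓ, hP.card, ← hstar] at hcard
  subst hqr
  split_ifs at h hlow <;> nlinarith

theorem isTangent_of_forall_isBlack (hq : Fintype.card K = q) (hq_odd : Odd q)
    (hS : S ⊆ pgLine K) (h2 : P2 K S q) (h2a : P2a K S q) (h2b : P2b K S q) (hℓS : ℓ ∈ S)
    (hall : ∀ y ∈ points ℓ, IsBlack K S q y) (hσ : σ ∈ pgPlane K) (hℓσ : ℓ ≤ σ) :
    IsTangent K S q σ := by
  have hsum := sum_ncard_pencilS_points_line hS hσ (hS hℓS) hℓσ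
  rw [if_pos hℓS, Finset.sum_congr rfl fun x hx => ?_, Finset.sum_const, smul_eq_mul,
    ← Set.ncard_eq_toFinset_card', ncard_points_of_mem_pgLine (hS hℓS), hq] at hsum
  · exact ⟨hσ, by rw [← Nat.add_right_cancel_iff (n := q), ← hsum]; ring⟩
  obtain ⟨hx, hxℓ⟩ := Set.mem_toFinset.mp hx
  obtain ⟨σx, hσxT, hxσx, hσxS⟩ :=
    exists_isVertex_of_isBlack hq hq_odd hS h2 h2a h2b (hall x ⟨hx, hxℓ⟩)
  -- `σ ≠ σx`, since the line `ℓ` of `S` passes through the vertex `x` of `σx`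
  refine hxσx.ncard_pencilS_of_ne_plane hq hS hσxT.1 hσxS hσ (hxℓ.trans hℓσ) fun h => ?_
  exact (hxσx.2.2 ℓ (hS hℓS) (h ▸ hℓσ)).mp hℓS hxℓ

theorem exists_not_isBlack_of_isTangent (hP : SatisfiesP K S q)
    (hT : IsTangent K S q π) : ∃ y ∈ points π, ¬ IsBlack K S q y := by
  by_contra! hall
  obtain ⟨r, hr, hqr, hA⟩ := exists_eq_two_mul_add_one (hP.card ▸ Fintype.one_lt_card) hP.odd
  obtain ⟨w, hw, hwA⟩ := hP.p1.2.1
  have hwb : ¬ IsBlack K S q w := fun h => sq_ne_half_mul_succ hP.card hP.odd (h.2 ▸ hwA)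
  have hwπ : ¬ w ≤ π := fun h => hwb (hall w ⟨hw, h⟩)
  have hnle : ∀ ℓ ∈ linesIn K S π, ¬ w ≤ ℓ := fun ℓ hℓ h => hwπ (h.trans hℓ.2)
  -- the `q ^ 2` planes `w ⊔ ℓ`, `ℓ ∈ S_π`, are tangent, so the pencils at `w` are too large
  have hinj : Set.InjOn (w ⊔ ·) (linesIn K S π) := by
    intro ℓ hℓ ℓ' hℓ' (h : w ⊔ ℓ = w ⊔ ℓ')
    have hne : w ⊔ ℓ ≠ π := fun h' => hwπ (h' ▸ le_sup_left)
    have hplane := sup_mem_pgPlane (hP.subset hℓ.1) hw (hnle ℓ hℓ)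
    rw [eq_inf_of_le hplane hT.1 hne (hP.subset hℓ.1) le_sup_right hℓ.2,
      eq_inf_of_le hplane hT.1 hne (hP.subset hℓ'.1) (by rw [h]; exact le_sup_right) hℓ'.2]
  have hfull : ∀ ℓ ∈ linesIn K S π, (pencilS K S w (w ⊔ ℓ)).ncard = q := fun ℓ hℓ =>
    ncard_pencilS_of_not_isBlack hP
      (isTangent_of_forall_isBlack hP.card hP.odd hP.subset hP.p2 hP.p2a hP.p2b hℓ.1
        (fun y hy => hall y (points_mono hℓ.2 hy))
        (sup_mem_pgPlane (hP.subset hℓ.1) hw (hnle ℓ hℓ)) le_sup_right) hw le_sup_left hwb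
  have hlow : q ^ 2 * q ≤ ∑ σ ∈ (planesThrough w).toFinset, (pencilS K S w σ).ncard := by
    calc q ^ 2 * q = ∑ ℓ ∈ (linesIn K S π).toFinset, (pencilS K S w (w ⊔ ℓ)).ncard := by
          rw [Finset.sum_congr rfl fun ℓ hℓ => hfull ℓ (Set.mem_toFinset.mp hℓ), Finset.sum_const,
            smul_eq_mul, ← Set.ncard_eq_toFinset_card', hT.2]
      _ = ∑ σ ∈ (linesIn K S π).toFinset.image (w ⊔ ·), (pencilS K S w σ).ncard :=
          (Finset.sum_image (f := fun σ => (pencilS K S w σ).ncard) fun ℓ hℓ ℓ' hℓ' h =>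
            hinj (Set.mem_toFinset.mp hℓ) (Set.mem_toFinset.mp hℓ') h).symm
      _ ≤ _ := Finset.sum_le_sum_of_subset fun σ hσ => by
          obtain ⟨ℓ, hℓ, rfl⟩ := Finset.mem_image.mp hσ
          have hℓ := Set.mem_toFinset.mp hℓ
          exact Set.mem_toFinset.mpr ⟨sup_mem_pgPlane (hP.subset hℓ.1) hw (hnle ℓ hℓ), le_sup_left⟩
  rw [sum_ncard_pencilS_planesThrough_point hP.subset, hwA, hA, hP.card] at hlow
  subst hqr
  nlinarith

theorem sup_mem_blackLines (hP : SatisfiesP K S q)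
    (hT : IsTangent K S q π) (hp : IsVertex S p π) (hy : IsBlack K S q y) (hyπ : y ≤ π)
    (hyp : y ≠ p) : y ⊔ p ∈ blackLines S q p π := by
  have hℓ := sup_mem_pgLine hy.1 hp.1 hyp
  have hℓπ : y ⊔ p ≤ π := sup_le hyπ hp.2.1
  refine ⟨⟨hℓ, le_sup_right, hℓπ⟩, forall_isBlack_of_lt_ncard hP hℓ ?_⟩
  have hpair : ({y, p} : Set _) ⊆ {x ∈ points (y ⊔ p) | IsBlack K S q x} := by
    rintro x (rfl | rfl)
    · exact ⟨⟨hy.1, le_sup_left⟩, hy⟩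
    · exact ⟨⟨hp.1, le_sup_right⟩, hp.isBlack hP hT⟩
  have := Set.ncard_le_ncard hpair
  rw [Set.ncard_pair hyp] at this
  rw [if_neg fun h => (hp.2.2 _ hℓ hℓπ).mp h le_sup_right]
  omega

theorem forall_isBlack_of_three_blackLines (hP : SatisfiesP K S q)
    (hT : IsTangent K S q π) (hp : IsVertex S p π) {a b c : Submodule K (Fin 4 → K)}
    (ha : a ∈ blackLines S q p π) (hb : b ∈ blackLines S q p π) (hc : c ∈ blackLines S q p π)
    (hab : a ≠ b) (hac : a ≠ c) (hbc : b ≠ c) (hm : m ∈ linesIn K S π) :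
    ∀ y ∈ points m, IsBlack K S q y := by
  have hpm : ¬ p ≤ m := (hp.2.2 m (hP.subset hm.1) hm.2).mp hm.1
  have hmeet : ∀ l ∈ blackLines S q p π, m ⊓ l ∈ pgPoint K ∧ IsBlack K S q (m ⊓ l) :=
    fun l ⟨⟨hl, hpl, hlπ⟩, hlb⟩ =>
      have hpt := inf_mem_pgPoint hT.1 (hP.subset hm.1) hl (fun h => hpm (h ▸ hpl)) hm.2 hlπ
      ⟨hpt, hlb _ ⟨hpt, inf_le_right⟩⟩
  have hdist : ∀ l ∈ blackLines S q p π, ∀ l' ∈ blackLines S q p π, l ≠ l' → m ⊓ l ≠ m ⊓ l' :=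
    fun l hl l' hl' hne h => hpm <| by
      rw [← eq_of_mem_pgPoint (hmeet l hl).1 hp.1 (inf_eq_of_ne hl.1.1 hl'.1.1 hne hp.1
        hl.1.2.1 hl'.1.2.1 ▸ le_inf inf_le_right (h ▸ inf_le_right))]
      exact inf_le_left
  refine forall_isBlack_of_lt_ncard hP (hP.subset hm.1) ?_
  rw [if_pos hm.1, Set.two_lt_ncard_iff]
  exact ⟨m ⊓ a, m ⊓ b, m ⊓ c, ⟨⟨(hmeet a ha).1, inf_le_left⟩, (hmeet a ha).2⟩,
    ⟨⟨(hmeet b hb).1, inf_le_left⟩, (hmeet b hb).2⟩,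
    ⟨⟨(hmeet c hc).1, inf_le_left⟩, (hmeet c hc).2⟩,
    hdist a ha b hb hab, hdist a ha c hc hac, hdist b hb c hc hbc⟩

theorem ncard_blackLines_le_two (hP : SatisfiesP K S q)
    (hT : IsTangent K S q π) (hp : IsVertex S p π) : (blackLines S q p π).ncard ≤ 2 := by
  by_contra! hlt
  obtain ⟨a, b, c, ha, hb, hc, hab, hac, hbc⟩ := (Set.two_lt_ncard_iff).mp hlt
  obtain ⟨y, ⟨hy, hyπ⟩, hyb⟩ := exists_not_isBlack_of_isTangent hP hT
  have hyp : y ≠ p := fun h => hyb (h ▸ hp.isBlack hP hT)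
  obtain ⟨m, hmS, hym, hmπ⟩ : (pencilS K S y π).Nonempty := by
    rw [← Set.ncard_pos, hp.ncard_pencilS_of_ne hP.card hP.subset hT.1 hy hyπ hyp]
    exact hP.card ▸ Fintype.card_pos
  exact hyb (forall_isBlack_of_three_blackLines hP hT hp ha hb hc hab hac
    hbc ⟨hmS, hmπ⟩ y ⟨hy, hym⟩)

theorem blackLines_nonempty (hP : SatisfiesP K S q)
    (hT : IsTangent K S q π) (hp : IsVertex S p π) : (blackLines S q p π).Nonempty := by
  obtain ⟨ℓ, hℓ⟩ := linesIn_nonempty hP.card hT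
  obtain ⟨x, ⟨hx, hxℓ⟩, hxb⟩ :=
    exists_isBlack_of_mem_linesIn hP.card hP.odd hP.subset hP.p1 hP.p2 hT hℓ
  have hxp : x ≠ p := fun h => (hp.2.2 ℓ (hP.subset hℓ.1) hℓ.2).mp hℓ.1 (h ▸ hxℓ)
  exact ⟨_, sup_mem_blackLines hP hT hp hxb (hxℓ.trans hℓ.2) hxp⟩

theorem setOf_isBlack_eq_biUnion (hP : SatisfiesP K S q)
    (hT : IsTangent K S q π) (hp : IsVertex S p π) :
    {y | IsBlack K S q y ∧ y ≤ π} = ⋃ l ∈ blackLines S q p π, points l := by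
  ext y
  simp only [Set.mem_ofPred_eq, Set.mem_iUnion, exists_prop]
  constructor
  · rintro ⟨hyb, hyπ⟩
    by_cases hyp : y = p
    · obtain ⟨l, hl⟩ := blackLines_nonempty hP hT hp
      exact ⟨l, hl, hyp ▸ hp.1, hyp ▸ hl.1.2.1⟩
    · exact ⟨y ⊔ p, sup_mem_blackLines hP hT hp hyb hyπ hyp, hyb.1,
        le_sup_left⟩
  · rintro ⟨l, hl, hy⟩
    exact ⟨hl.2 y hy, hy.2.trans hl.1.2.2⟩



end Finite

end PG3

open PG3

/-- For every tangent plane `π`, the set of black points of `π`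
is either the point set of a single line of `π` or the union of the point sets
of two distinct lines of `π`. -/
theorem stmt_19 (K : Type) [Field K] [Fintype K] (q : ℕ) (hq : Fintype.card K = q)
    (hq_odd : Odd q) (S : Set (Submodule K (Fin 4 → K))) (hS : S ⊆ pgLine K)
    (h1 : P1 K S q) (h2 : P2 K S q) (h2a : P2a K S q) (h2b : P2b K S q) :
    ∀ π, IsTangent K S q π →
      (∃ l ∈ pgLine K, l ≤ π ∧
        {p | IsBlack K S q p ∧ p ≤ π} = {p | p ∈ pgPoint K ∧ p ≤ l}) ∨
      (∃ l ∈ pgLine K, ∃ l' ∈ pgLine K, l ≠ l' ∧ l ≤ π ∧ l' ≤ π ∧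
        {p | IsBlack K S q p ∧ p ≤ π} =
          {p | p ∈ pgPoint K ∧ p ≤ l} ∪ {p | p ∈ pgPoint K ∧ p ≤ l'}) := by
  intro π hT
  have hP : SatisfiesP K S q := ⟨hq, hq_odd, hS, h1, h2, h2a, h2b⟩
  obtain ⟨p, hp⟩ := exists_isVertex_of_isTangent hq hS h2a hT
  have hblack := setOf_isBlack_eq_biUnion hP hT hp
  have hpos := (Set.ncard_pos).mpr (blackLines_nonempty hP hT hp)
  have hle := ncard_blackLines_le_two hP hT hp
  obtain hone | htwo : (blackLines S q p π).ncard = 1 ∨ (blackLines S q p π).ncard = 2 := by omega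
  · obtain ⟨l, hL⟩ := Set.ncard_eq_one.mp hone
    have ⟨⟨hl, _, hlπ⟩, _⟩ : l ∈ blackLines S q p π := hL ▸ rfl
    exact Or.inl ⟨l, hl, hlπ, by rw [hblack, hL, Set.biUnion_singleton]; rfl⟩
  · obtain ⟨l, l', hne, hL⟩ := Set.ncard_eq_two.mp htwo
    have ⟨⟨hl, _, hlπ⟩, _⟩ : l ∈ blackLines S q p π := hL ▸ Or.inl rfl
    have ⟨⟨hl', _, hl'π⟩, _⟩ : l' ∈ blackLines S q p π := hL ▸ Or.inr rfl
    refine Or.inr ⟨l, hl, l', hl', hne, hlπ, hl'π, ?_⟩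
    rw [hblack, hL, Set.biUnion_insert, Set.biUnion_singleton]
    rfl
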